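/- Suppose m, m' : ℝ^d → ℝ and masks B, B' : ℝ^d → ℝ^d are coordinate projections onto subsets S, S' ⊆ {1,…,d} respectively, with m∘B = m'∘B' as functions on ℝ^d. If m is non-constant in every coordinate of S (as a function of the masked input) and m' is non-constant in every coordinate of S', then S = S'. -/

import Mathlib

/-!
A function that factors through the projection onto `S'` cannot see a coordinate outside `S'`:
two inputs differing only there have the same projection. So every coordinate in which
`m ∘ B = m' ∘ B'` is non-constant lies in `S'`, and symmetrically in `S`.
-/

namespace CoordinateMask

variable {ι α β : Type*}

def IsNonconstantIn (f : (ι → α) → β) (i : ι) : Prop :=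
  ∃ x y : ι → α, (∀ j, j ≠ i → x j = y j) ∧ f x ≠ f y

variable [DecidableEq ι] [Zero α] {S : Finset ι} {B : (ι → α) → ι → α}

theorem mask_eq_of_eqOn (hB : ∀ x i, B x i = if i ∈ S then x i else 0) {x y : ι → α}
    (hxy : ∀ j ∈ S, x j = y j) : B x = B y := by
  funext j
  rw [hB, hB]
  split_ifs with hj
  · exact hxy j hj
  · rfl

theorem mem_of_isNonconstantIn_comp (hB : ∀ x i, B x i = if i ∈ S then x i else 0)
    {g : (ι → α) → β} {i : ι} (hg : IsNonconstantIn (g ∘ B) i) : i ∈ S := by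
  by_contra hi
  obtain ⟨x, y, hxy, hne⟩ := hg
  exact hne (congrArg g (mask_eq_of_eqOn hB fun j hj => hxy j (ne_of_mem_of_not_mem hj hi)))

end CoordinateMask

open CoordinateMask in
/-- Masking-uniqueness: if m∘B = m'∘B' where B, B' are coordinate projections
onto S, S' and the composites are non-constant in every coordinate of S and S'
respectively, then S = S'. -/
theorem mask_uniqueness {d : ℕ} (S S' : Finset (Fin d))
    (m m' : (Fin d → ℝ) → ℝ)
    (B B' : (Fin d → ℝ) → Fin d → ℝ)
    (hB : ∀ (x : Fin d → ℝ) (i : Fin d), B x i = if i ∈ S then x i else 0)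
    (hB' : ∀ (x : Fin d → ℝ) (i : Fin d), B' x i = if i ∈ S' then x i else 0)
    (heq : ∀ x, m (B x) = m' (B' x))
    (hnc : ∀ i ∈ S, ∃ x y : Fin d → ℝ,
      (∀ j, j ≠ i → x j = y j) ∧ m (B x) ≠ m (B y))
    (hnc' : ∀ i ∈ S', ∃ x y : Fin d → ℝ,
      (∀ j, j ≠ i → x j = y j) ∧ m' (B' x) ≠ m' (B' y)) :
    S = S' := by
  have hcomp : m ∘ B = m' ∘ B' := funext heq
  have hS : ∀ i ∈ S, IsNonconstantIn (m' ∘ B') i := fun i hi => hcomp ▸ hnc i hi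
  have hS' : ∀ i ∈ S', IsNonconstantIn (m ∘ B) i := fun i hi => hcomp ▸ hnc' i hi
  exact le_antisymm (fun i hi => mem_of_isNonconstantIn_comp hB' (hS i hi))
    (fun i hi => mem_of_isNonconstantIn_comp hB (hS' i hi))
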